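/- Fix an integer d ≥ 2, an index ι ∈ I = {−d, …, −1, 1, …, d}, k ∈ [−π,π]^d, and a real number z with |z| < 1/(2d−1). Then the generating function of the restricted non-backtracking walk counts satisfies Σ_{n=0}^∞ b̂_n^ι(k) z^n = (1 − z·e^{i k_ι})/(1 + (2d−1)z² − 2dz·D̂(k)). -/

import Mathlib

open scoped BigOperators
open Matrix

noncomputable section

/-- The index set `I = {-d, …, -1, 1, …, d}`. -/
def Idx (d : ℕ) : Finset ℤ := (Finset.Icc (-(d : ℤ)) d).erase 0

lemma mem_Idx {d : ℕ} {ι : ℤ} (h : ι ∈ Idx d) : ι ≠ 0 ∧ -(d : ℤ) ≤ ι ∧ ι ≤ d := by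
  simpa [Idx, Finset.mem_erase, Finset.mem_Icc, and_assoc] using h

lemma mem_Idx' {d : ℕ} {ι : ℤ} (h1 : ι ≠ 0) (h2 : -(d : ℤ) ≤ ι) (h3 : ι ≤ d) :
    ι ∈ Idx d := by
  simp [Idx, Finset.mem_erase, Finset.mem_Icc]; omega

/-- `k_ι = sign(ι) · k_{|ι|}` (with `|ι| ∈ {1,…,d}` re-indexed as `Fin d`). -/
def kc {d : ℕ} (k : Fin d → ℝ) (ι : Idx d) : ℝ :=
  (ι.1.sign : ℝ) * k ⟨ι.1.natAbs - 1, by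
    obtain ⟨h1, h2, h3⟩ := mem_Idx ι.2; omega⟩

/-- The negation `-ι` as an element of the index set. -/
def negIdx {d : ℕ} (ι : Idx d) : Idx d :=
  ⟨-ι.1, by obtain ⟨h1, h2, h3⟩ := mem_Idx ι.2; exact mem_Idx' (by omega) (by omega) (by omega)⟩

/-- The coordinate vector `e⃗_ι ∈ ℂ^I`. -/
def eVec {d : ℕ} (ι : Idx d) : Idx d → ℂ := fun κ => if κ = ι then 1 else 0

/-- The unit step `e_ι = sign(ι)·(basis vector |ι|)` in `ℤ^d`. -/
def stepVec {d : ℕ} (ι : Idx d) : Fin d → ℤ :=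
  fun j => if (j : ℕ) = ι.1.natAbs - 1 then ι.1.sign else 0

/-- The all-ones matrix `C`. -/
def matC (d : ℕ) : Matrix (Idx d) (Idx d) ℂ := Matrix.of fun _ _ => 1

/-- The matrix `J` with `J_{ι,κ} = δ_{ι,-κ}`. -/
def matJ (d : ℕ) : Matrix (Idx d) (Idx d) ℂ :=
  Matrix.of fun ι κ => if ι.1 = -κ.1 then 1 else 0

/-- The diagonal matrix `D[k]` with entries `e^{i k_ι}`. -/
def matD {d : ℕ} (k : Fin d → ℝ) : Matrix (Idx d) (Idx d) ℂ :=
  Matrix.diagonal fun ι => Complex.exp (Complex.I * (kc k ι : ℂ))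

/-- The NBW transition matrix `A[k] = (C − J)·D[−k]`. -/
def matA {d : ℕ} (k : Fin d → ℝ) : Matrix (Idx d) (Idx d) ℂ :=
  (matC d - matJ d) * matD (-k)

/-- `ω` is an `n`-step nearest-neighbour non-backtracking walk on `ℤ^d`. -/
def IsNBW (d n : ℕ) (ω : Fin (n + 1) → (Fin d → ℤ)) : Prop :=
  ω 0 = 0 ∧
  (∀ i : ℕ, ∀ hi : i < n,
    (∑ j, |ω ⟨i + 1, by omega⟩ j - ω ⟨i, by omega⟩ j|) = 1) ∧
  (∀ i : ℕ, ∀ hi : i + 2 ≤ n, ω ⟨i + 2, by omega⟩ ≠ ω ⟨i, by omega⟩)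

/-- `b_n(x)`: the number of `n`-step NBWs ending at `x`. -/
def bc (d n : ℕ) (x : Fin d → ℤ) : ℕ :=
  Nat.card {ω : Fin (n + 1) → (Fin d → ℤ) // IsNBW d n ω ∧ ω (Fin.last n) = x}

/-- `b_n^ι(x)`: the number of `n`-step NBWs ending at `x` whose first step is not `e_ι`. -/
def bcRes (d n : ℕ) (ι : Idx d) (x : Fin d → ℤ) : ℕ :=
  Nat.card {ω : Fin (n + 1) → (Fin d → ℤ) //
    IsNBW d n ω ∧ ω (Fin.last n) = x ∧ ∀ _ : 1 ≤ n, ω ⟨1, by omega⟩ ≠ stepVec ι}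

/-- Fourier transform `f̂(k) = Σ_x f(x) e^{i k·x}` of a (finitely supported) `f : ℤ^d → ℕ`. -/
def fhat {d : ℕ} (f : (Fin d → ℤ) → ℕ) (k : Fin d → ℝ) : ℂ :=
  ∑' x : Fin d → ℤ, (f x : ℂ) * Complex.exp (Complex.I * ∑ j, (k j : ℂ) * (x j : ℂ))

/-- `b̂_n(k)`. -/
def bhat (d n : ℕ) (k : Fin d → ℝ) : ℂ := fhat (bc d n) k

/-- `b⃗_n(k)`, the vector with entries `b̂_n^ι(k)`. -/
def bvec (d n : ℕ) (k : Fin d → ℝ) : Idx d → ℂ := fun ι => fhat (bcRes d n ι) k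

/-- `D̂(k) = (1/d) Σ_j cos k_j`. -/
def Dhat {d : ℕ} (k : Fin d → ℝ) : ℝ := (1 / d) * ∑ j, Real.cos (k j)

/-! Reading a walk through its sequence of unit steps identifies the NBWs counted by `b_n^ι` with
the step sequences `s ∈ Iⁿ` such that `s₀ ≠ ι` and `s_{t+1} ≠ -s_t`, and turns `b̂_n^ι(k)` into
the weighted count `w_n(ι) = Σ_s Π_t e^{i k_{s_t}}`. Splitting off the first step gives
`w_{n+1}(ι) = Σ_{κ ≠ ι} e^{i k_κ} w_n(-κ)`; since `e^{i k_κ} e^{i k_{-κ}} = 1`, every `w_n` is an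
affine function of `e^{i k_ι}`, and this forces the three-term recurrence
`w_{n+2} = 2d D̂(k) w_{n+1} - (2d-1) w_n`. Its generating function is rational, with the claimed
numerator because `w_0 = 1` and `w_1 = 2d D̂(k) - e^{i k_ι}`. The bound `|w_n| ≤ (2d-1)ⁿ` gives
convergence for `|z| < 1/(2d-1)`, where the denominator is at least `(1-|z|)(1-(2d-1)|z|) > 0`. -/

namespace Idx

variable {d : ℕ}

lemma one_le (ι : Idx d) : 1 ≤ d := by
  obtain ⟨h0, h1, h2⟩ := mem_Idx ι.2
  omega

def equivAxisSign : Idx d ≃ Fin d × ℤˣ where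
  toFun ι := (⟨ι.1.natAbs - 1, by obtain ⟨h1, h2, h3⟩ := mem_Idx ι.2; omega⟩,
    (Int.isUnit_iff_abs_eq.mpr (Int.abs_sign_of_ne_zero (mem_Idx ι.2).1)).unit)
  invFun p := ⟨p.2 * (p.1 + 1), by
    obtain ⟨j, u⟩ := p
    rcases Int.units_eq_one_or u with rfl | rfl <;> apply mem_Idx' <;> simp <;> omega⟩
  left_inv ι := by
    obtain ⟨h1, -, -⟩ := mem_Idx ι.2
    ext
    simp only [IsUnit.unit_spec]
    rw [Nat.cast_sub (by omega), Nat.cast_one, sub_add_cancel, Int.natCast_natAbs,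
      Int.sign_mul_abs]
  right_inv p := by
    obtain ⟨j, u⟩ := p
    rcases Int.units_eq_one_or u with rfl | rfl <;> ext <;> simp <;> omega

lemma coe_sign_equivAxisSign (ι : Idx d) : ((equivAxisSign ι).2 : ℤ) = ι.1.sign :=
  IsUnit.unit_spec _

lemma card_eq : Fintype.card (Idx d) = 2 * d := by
  rw [Fintype.card_congr equivAxisSign, Fintype.card_prod, Fintype.card_fin,
    Fintype.card_units_int, mul_comm]

lemma stepVec_eq_single (ι : Idx d) :
    stepVec ι = Pi.single (equivAxisSign ι).1 ((equivAxisSign ι).2 : ℤ) := by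
  ext j
  rw [coe_sign_equivAxisSign, Pi.single_apply, stepVec]
  simp only [Fin.ext_iff]
  rfl

lemma kc_eq (k : Fin d → ℝ) (ι : Idx d) :
    kc k ι = ((equivAxisSign ι).2 : ℤ) * k (equivAxisSign ι).1 := by
  rw [coe_sign_equivAxisSign]
  rfl

lemma equivAxisSign_negIdx (ι : Idx d) :
    equivAxisSign (negIdx ι) = ((equivAxisSign ι).1, -(equivAxisSign ι).2) := by
  ext
  · simp [equivAxisSign, negIdx]
  · simp only [coe_sign_equivAxisSign, Units.val_neg]
    simp [negIdx]

end Idx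

section Steps

variable {d : ℕ}

lemma stepVec_injective : Function.Injective (stepVec (d := d)) := by
  intro ι κ h
  rw [Idx.stepVec_eq_single, Idx.stepVec_eq_single] at h
  apply Idx.equivAxisSign.injective
  generalize Idx.equivAxisSign ι = p, Idx.equivAxisSign κ = q at h ⊢
  obtain ⟨j, u⟩ := p
  obtain ⟨j', u'⟩ := q
  dsimp only at h
  obtain rfl : j = j' := by
    by_contra hne
    simpa [hne] using congrFun h j
  rw [Units.ext (Pi.single_injective j h)]

lemma stepVec_negIdx (ι : Idx d) : stepVec (negIdx ι) = -stepVec ι := by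
  rw [Idx.stepVec_eq_single, Idx.stepVec_eq_single, Idx.equivAxisSign_negIdx, Units.val_neg,
    Pi.single_neg]

lemma sum_abs_stepVec (ι : Idx d) : ∑ j, |stepVec ι j| = 1 := by
  rw [Idx.stepVec_eq_single]
  simp [Pi.single_apply, apply_ite, Int.isUnit_iff_abs_eq.mp (Units.isUnit _)]

lemma exists_stepVec_eq {v : Fin d → ℤ} (hv : ∑ j, |v j| = 1) : ∃ κ, stepVec κ = v := by
  obtain ⟨j, hj⟩ : ∃ j, v j ≠ 0 := by
    by_contra! h
    simp [h] at hv
  have hsplit : |v j| + ∑ i ∈ Finset.univ.erase j, |v i| = 1 :=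
    (Finset.add_sum_erase _ _ (Finset.mem_univ j)).trans hv
  have hnonneg : 0 ≤ ∑ i ∈ Finset.univ.erase j, |v i| :=
    Finset.sum_nonneg fun _ _ => abs_nonneg _
  have hvj : |v j| = 1 := by linarith [Int.one_le_abs hj]
  have hrest : ∀ i ≠ j, v i = 0 := by
    intro i hi
    rw [hvj, add_eq_left, Finset.sum_eq_zero_iff_of_nonneg fun _ _ => abs_nonneg _] at hsplit
    exact abs_eq_zero.mp (hsplit i (Finset.mem_erase.mpr ⟨hi, Finset.mem_univ i⟩))
  refine ⟨Idx.equivAxisSign.symm (j, (Int.isUnit_iff_abs_eq.mpr hvj).unit), ?_⟩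
  rw [Idx.stepVec_eq_single, Equiv.apply_symm_apply, IsUnit.unit_spec]
  ext i
  rcases eq_or_ne i j with rfl | hi
  · simp
  · simp [hi, hrest i hi]

lemma sum_mul_stepVec (k : Fin d → ℝ) (ι : Idx d) :
    ∑ j, (k j : ℂ) * (stepVec ι j : ℂ) = kc k ι := by
  rw [Idx.stepVec_eq_single, Idx.kc_eq]
  simp [Pi.single_apply, mul_comm]

lemma kc_negIdx (k : Fin d → ℝ) (ι : Idx d) : kc k (negIdx ι) = -kc k ι := by
  rw [Idx.kc_eq, Idx.kc_eq, Idx.equivAxisSign_negIdx]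
  push_cast
  ring

def stepPhase (k : Fin d → ℝ) (κ : Idx d) : ℂ := Complex.exp (Complex.I * kc k κ)

lemma stepPhase_mul_stepPhase_negIdx (k : Fin d → ℝ) (κ : Idx d) :
    stepPhase k κ * stepPhase k (negIdx κ) = 1 := by
  rw [stepPhase, stepPhase, ← Complex.exp_add, kc_negIdx, Complex.ofReal_neg, mul_neg,
    add_neg_cancel, Complex.exp_zero]

lemma norm_stepPhase (k : Fin d → ℝ) (κ : Idx d) : ‖stepPhase k κ‖ = 1 := by
  rw [stepPhase, mul_comm, Complex.norm_exp_ofReal_mul_I]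

lemma sum_stepPhase (k : Fin d → ℝ) : ∑ κ, stepPhase k κ = 2 * d * Dhat k := by
  rw [← Idx.equivAxisSign.symm.sum_comp, Fintype.sum_prod_type]
  have hpair (j : Fin d) : ∑ u : ℤˣ, Complex.exp (Complex.I * ((u : ℤ) * k j : ℝ)) =
      2 * Real.cos (k j) := by
    rw [UnitsInt.univ, Finset.sum_pair (by decide), Complex.ofReal_cos, Complex.two_cos]
    push_cast
    ring_nf
  simp_rw [stepPhase, Idx.kc_eq, Equiv.apply_symm_apply, hpair, ← Finset.mul_sum, Dhat]
  rcases eq_or_ne d 0 with rfl | hd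
  · simp
  · push_cast
    field_simp

end Steps

section NonBacktracking

variable {α : Type*} (neg : α → α)

def IsNonBacktracking {n : ℕ} (s : Fin n → α) : Prop :=
  ∀ i (h : i + 1 < n), s ⟨i + 1, h⟩ ≠ neg (s ⟨i, by omega⟩)

def IsRestrictedNB {n : ℕ} (ι : α) (s : Fin n → α) : Prop :=
  (∀ h : 0 < n, s ⟨0, h⟩ ≠ ι) ∧ IsNonBacktracking neg s

lemma isRestrictedNB_cons {n : ℕ} (ι a : α) (s : Fin n → α) :
    IsRestrictedNB neg ι (Fin.cons a s : Fin (n + 1) → α) ↔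
      a ≠ ι ∧ IsRestrictedNB neg (neg a) s := by
  constructor
  · rintro ⟨h0, h⟩
    exact ⟨h0 n.succ_pos, fun hn => h 0 (Nat.succ_lt_succ hn), fun i hi => h (i + 1) (by omega)⟩
  · rintro ⟨h0, h1, h⟩
    refine ⟨fun _ => h0, ?_⟩
    rintro (_ | i) hi
    · exact h1 (by omega)
    · exact h i (by omega)

variable [Fintype α] {R : Type*} [CommRing R] (c : α → R)

open Classical in
def restrictedNBWeight (n : ℕ) (ι : α) : R :=
  ∑ s : Fin n → α with IsRestrictedNB neg ι s, ∏ t, c (s t)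

lemma restrictedNBWeight_zero (ι : α) : restrictedNBWeight neg c 0 ι = 1 := by
  simp [restrictedNBWeight, IsRestrictedNB, IsNonBacktracking]

variable [DecidableEq α]

lemma restrictedNBWeight_succ (n : ℕ) (ι : α) :
    restrictedNBWeight neg c (n + 1) ι =
      ∑ κ ∈ Finset.univ.erase ι, c κ * restrictedNBWeight neg c n (neg κ) := by
  classical
  simp only [restrictedNBWeight, Finset.sum_filter, Finset.mul_sum]
  rw [← (Fin.consEquiv fun _ => α).sum_comp, Fintype.sum_prod_type, ← Finset.filter_ne']
  simp only [Fin.consEquiv, Equiv.coe_fn_mk, isRestrictedNB_cons, Fin.prod_univ_succ,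
    Fin.cons_zero, Fin.cons_succ, Finset.sum_filter, mul_ite, mul_zero, ite_and]
  refine Finset.sum_congr rfl fun κ _ => ?_
  split_ifs <;> simp

variable {neg c}

lemma restrictedNBWeight_succ_of_affine (hc : ∀ a, c a * c (neg a) = 1) {n : ℕ} {p q : R}
    (h : ∀ ι, restrictedNBWeight neg c n ι = p + q * c ι) (ι : α) :
    restrictedNBWeight neg c (n + 1) ι =
      ((∑ a, c a) * p + ((Fintype.card α : R) - 1) * q) + -p * c ι := by
  have hterm (κ : α) : c κ * restrictedNBWeight neg c n (neg κ) = p * c κ + q := by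
    rw [h, mul_add, mul_left_comm, hc, mul_one, mul_comm]
  simp only [restrictedNBWeight_succ, hterm, Finset.sum_add_distrib, ← Finset.mul_sum,
    Finset.sum_erase_eq_sub (Finset.mem_univ ι), Finset.sum_const, Finset.card_univ,
    nsmul_eq_mul]
  ring

lemma exists_restrictedNBWeight_eq_affine (hc : ∀ a, c a * c (neg a) = 1) (n : ℕ) :
    ∃ p q : R, ∀ ι, restrictedNBWeight neg c n ι = p + q * c ι := by
  induction n with
  | zero => exact ⟨1, 0, fun ι => by simp [restrictedNBWeight_zero]⟩
  | succ n ih =>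
    obtain ⟨p, q, h⟩ := ih
    exact ⟨_, _, restrictedNBWeight_succ_of_affine hc h⟩

lemma restrictedNBWeight_one (hc : ∀ a, c a * c (neg a) = 1) (ι : α) :
    restrictedNBWeight neg c 1 ι = ∑ a, c a - c ι := by
  rw [restrictedNBWeight_succ_of_affine hc (p := 1) (q := 0) (fun _ => by
    simp [restrictedNBWeight_zero])]
  ring

lemma restrictedNBWeight_add_two (hc : ∀ a, c a * c (neg a) = 1) (n : ℕ) (ι : α) :
    restrictedNBWeight neg c (n + 2) ι = (∑ a, c a) * restrictedNBWeight neg c (n + 1) ι -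
      ((Fintype.card α : R) - 1) * restrictedNBWeight neg c n ι := by
  obtain ⟨p, q, h⟩ := exists_restrictedNBWeight_eq_affine hc n
  have h₁ := restrictedNBWeight_succ_of_affine hc h
  rw [restrictedNBWeight_succ_of_affine hc h₁, h₁, h]
  ring

end NonBacktracking

lemma norm_restrictedNBWeight_le {α : Type*} [Fintype α] [DecidableEq α] {neg : α → α}
    {R : Type*} [NormedCommRing R] [NormOneClass R] {c : α → R} (hc : ∀ a, ‖c a‖ ≤ 1)
    (n : ℕ) (ι : α) : ‖restrictedNBWeight neg c n ι‖ ≤ ((Fintype.card α : ℝ) - 1) ^ n := by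
  induction n generalizing ι with
  | zero => simp [restrictedNBWeight_zero]
  | succ n ih =>
    have hterm (κ : α) : ‖c κ * restrictedNBWeight neg c n (neg κ)‖ ≤
        ((Fintype.card α : ℝ) - 1) ^ n :=
      (norm_mul_le _ _).trans <| by
        simpa using mul_le_mul (hc κ) (ih (neg κ)) (norm_nonneg _) zero_le_one
    calc ‖restrictedNBWeight neg c (n + 1) ι‖
        ≤ ∑ κ ∈ Finset.univ.erase ι, ‖c κ * restrictedNBWeight neg c n (neg κ)‖ := by
          rw [restrictedNBWeight_succ]
          exact norm_sum_le _ _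
      _ ≤ (Finset.univ.erase ι).card • ((Fintype.card α : ℝ) - 1) ^ n :=
          Finset.sum_le_card_nsmul _ _ _ fun κ _ => hterm κ
      _ = ((Fintype.card α : ℝ) - 1) ^ (n + 1) := by
          rw [Finset.card_erase_of_mem (Finset.mem_univ ι), Finset.card_univ, nsmul_eq_mul,
            Nat.cast_pred (Fintype.card_pos_iff.mpr ⟨ι⟩), pow_succ']

section StepPhase

variable {d : ℕ} (k : Fin d → ℝ)

lemma restrictedNBWeight_stepPhase_add_two (n : ℕ) (ι : Idx d) :
    restrictedNBWeight negIdx (stepPhase k) (n + 2) ι =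
      2 * d * Dhat k * restrictedNBWeight negIdx (stepPhase k) (n + 1) ι -
        (2 * d - 1) * restrictedNBWeight negIdx (stepPhase k) n ι := by
  rw [restrictedNBWeight_add_two (stepPhase_mul_stepPhase_negIdx k), sum_stepPhase, Idx.card_eq]
  push_cast
  ring

lemma norm_restrictedNBWeight_stepPhase_le (n : ℕ) (ι : Idx d) :
    ‖restrictedNBWeight negIdx (stepPhase k) n ι‖ ≤ (2 * d - 1) ^ n := by
  have h := norm_restrictedNBWeight_le (neg := negIdx) (fun κ => (norm_stepPhase k κ).le) n ι
  rwa [Idx.card_eq, Nat.cast_mul, Nat.cast_two] at h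

end StepPhase

theorem hasSum_mul_pow_of_linear_recurrence {𝕜 : Type*} [Field 𝕜] [TopologicalSpace 𝕜]
    [IsTopologicalRing 𝕜] [T2Space 𝕜] {a : ℕ → 𝕜} {σ r z : 𝕜}
    (hrec : ∀ n, a (n + 2) = σ * a (n + 1) - r * a n) (hsum : Summable fun n => a n * z ^ n)
    (hden : 1 - σ * z + r * z ^ 2 ≠ 0) :
    HasSum (fun n => a n * z ^ n) ((a 0 + (a 1 - σ * a 0) * z) / (1 - σ * z + r * z ^ 2)) := by
  set F := ∑' n, a n * z ^ n
  have hsum₁ : Summable fun n => a (n + 1) * z ^ (n + 1) :=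
    (summable_nat_add_iff (f := fun n => a n * z ^ n) 1).mpr hsum
  have hF₁ : F = a 0 + ∑' n, a (n + 1) * z ^ (n + 1) := by
    simpa using (hsum.sum_add_tsum_nat_add 1).symm
  have hF₂ : F = a 0 + a 1 * z + ∑' n, a (n + 2) * z ^ (n + 2) := by
    simpa [Finset.sum_range_succ] using (hsum.sum_add_tsum_nat_add 2).symm
  have htail : ∑' n, a (n + 2) * z ^ (n + 2) =
      σ * z * ∑' n, a (n + 1) * z ^ (n + 1) - r * z ^ 2 * F := by
    rw [← tsum_mul_left, ← tsum_mul_left, ← (hsum₁.mul_left _).tsum_sub (hsum.mul_left _)]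
    exact tsum_congr fun n => by rw [hrec]; ring
  convert hsum.hasSum
  rw [div_eq_iff hden]
  linear_combination σ * z * hF₁ - hF₂ - htail

lemma summable_mul_pow_of_norm_le_pow {𝕜 : Type*} [NormedField 𝕜] [CompleteSpace 𝕜]
    {a : ℕ → 𝕜} {R : ℝ} {z : 𝕜} (ha : ∀ n, ‖a n‖ ≤ R ^ n) (hz : ‖z‖ * R < 1) :
    Summable fun n => a n * z ^ n := by
  have hR : 0 ≤ R := (norm_nonneg _).trans (by simpa using ha 1)
  refine Summable.of_norm_bounded
    (summable_geometric_of_lt_one (mul_nonneg (norm_nonneg z) hR) hz) fun n => ?_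
  rw [norm_mul, norm_pow, mul_pow, mul_comm]
  gcongr
  exact ha n

section Walks

variable {d n : ℕ}

def walkOfSteps (s : Fin n → Idx d) : Fin (n + 1) → Fin d → ℤ :=
  Fin.partialSum fun t => stepVec (s t)

lemma walkOfSteps_zero (s : Fin n → Idx d) : walkOfSteps s 0 = 0 :=
  Fin.partialSum_zero _

lemma walkOfSteps_succ (s : Fin n → Idx d) (i : ℕ) (hi : i < n) :
    walkOfSteps s ⟨i + 1, by omega⟩ = walkOfSteps s ⟨i, by omega⟩ + stepVec (s ⟨i, hi⟩) :=
  Fin.partialSum_succ _ ⟨i, hi⟩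

lemma walkOfSteps_one (s : Fin n → Idx d) (hn : 1 ≤ n) :
    walkOfSteps s ⟨1, by omega⟩ = stepVec (s ⟨0, hn⟩) := by
  rw [walkOfSteps_succ s 0 hn, Fin.mk_zero, walkOfSteps_zero, zero_add]

lemma walkOfSteps_last (s : Fin n → Idx d) :
    walkOfSteps s (Fin.last n) = ∑ t, stepVec (s t) := by
  rw [walkOfSteps, Fin.partialSum, Fin.val_last, List.take_of_length_le (by simp),
    List.sum_ofFn]

lemma walkOfSteps_injective : Function.Injective (walkOfSteps (d := d) (n := n)) := by
  intro s s' h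
  funext i
  apply stepVec_injective
  have h₁ := Fin.partialSum_right_neg (fun t => stepVec (s t)) i
  have h₂ := Fin.partialSum_right_neg (fun t => stepVec (s' t)) i
  rw [← walkOfSteps, h] at h₁
  exact h₁.symm.trans h₂

lemma isNBW_walkOfSteps_iff (s : Fin n → Idx d) :
    IsNBW d n (walkOfSteps s) ↔ IsNonBacktracking negIdx s := by
  have hback (i : ℕ) (hi : i + 2 ≤ n) :
      walkOfSteps s ⟨i + 2, by omega⟩ = walkOfSteps s ⟨i, by omega⟩ ↔
        s ⟨i + 1, by omega⟩ = negIdx (s ⟨i, by omega⟩) := by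
    rw [walkOfSteps_succ s (i + 1) (by omega), walkOfSteps_succ s i (by omega), add_assoc,
      add_eq_left, add_eq_zero_iff_neg_eq, ← stepVec_negIdx, stepVec_injective.eq_iff, eq_comm]
  refine ⟨fun ⟨_, _, h⟩ i hi => (hback i hi).not.mp (h i hi),
    fun h => ⟨walkOfSteps_zero s, fun i hi => ?_, fun i hi => (hback i hi).not.mpr (h i hi)⟩⟩
  simpa [walkOfSteps_succ s i hi] using sum_abs_stepVec (s ⟨i, hi⟩)

lemma exists_walkOfSteps_eq {ω : Fin (n + 1) → Fin d → ℤ} (hω : IsNBW d n ω) :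
    ∃ s, walkOfSteps s = ω := by
  obtain ⟨h₀, hstep, -⟩ := hω
  choose s hs using fun i : Fin n => exists_stepVec_eq (hstep i i.2)
  have hsteps : (fun t => stepVec (s t)) = fun i => -ω i.castSucc + ω i.succ :=
    funext fun i => (hs i).trans (neg_add_eq_sub _ _).symm
  refine ⟨s, ?_⟩
  rw [walkOfSteps, hsteps]
  simpa [h₀] using Fin.partialSum_left_neg ω

end Walks

section Counting

open Finset

variable {d n : ℕ}

lemma fhat_card_filter {β : Type*} (S : Finset β) (E : β → Fin d → ℤ) (k : Fin d → ℝ) :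
    fhat (fun x => #{b ∈ S | E b = x}) k =
      ∑ b ∈ S, Complex.exp (Complex.I * ∑ j, (k j : ℂ) * (E b j : ℂ)) := by
  rw [fhat, tsum_eq_sum (s := S.image E),
    sum_comp (fun x : Fin d → ℤ => Complex.exp (Complex.I * ∑ j, (k j : ℂ) * (x j : ℂ))) E]
  · simp only [nsmul_eq_mul]
  · intro x hx
    rw [filter_eq_empty_iff.mpr fun b hb hbx => hx (mem_image.mpr ⟨b, hb, hbx⟩)]
    simp

lemma exp_sum_mul_sum_stepVec (k : Fin d → ℝ) (s : Fin n → Idx d) :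
    Complex.exp (Complex.I * ∑ j, (k j : ℂ) * ((∑ t, stepVec (s t)) j : ℂ)) =
      ∏ t, stepPhase k (s t) := by
  have hsum : ∑ j, (k j : ℂ) * ((∑ t, stepVec (s t)) j : ℂ) = ∑ t, (kc k (s t) : ℂ) := by
    simp_rw [Finset.sum_apply, Int.cast_sum, mul_sum]
    rw [sum_comm]
    simp_rw [sum_mul_stepVec]
  rw [hsum, mul_sum, Complex.exp_sum]
  rfl

open Classical

lemma bcRes_eq_card (ι : Idx d) (x : Fin d → ℤ) :
    bcRes d n ι x =
      #{s : Fin n → Idx d | IsRestrictedNB negIdx ι s ∧ ∑ t, stepVec (s t) = x} := by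
  rw [← Fintype.card_subtype, ← Nat.card_eq_fintype_card, bcRes]
  symm
  refine Nat.card_eq_of_bijective (fun s => ⟨walkOfSteps s.1, ?_, ?_, ?_⟩) ⟨?_, ?_⟩
  · exact (isNBW_walkOfSteps_iff _).mpr s.2.1.2
  · rw [walkOfSteps_last, s.2.2]
  · intro hn
    rw [walkOfSteps_one _ hn, stepVec_injective.ne_iff]
    exact s.2.1.1 hn
  · intro s s' h
    exact Subtype.ext (walkOfSteps_injective (congrArg Subtype.val h))
  · rintro ⟨ω, hω, hlast, hfirst⟩
    obtain ⟨s, rfl⟩ := exists_walkOfSteps_eq hω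
    refine ⟨⟨s, ⟨fun hn => ?_, (isNBW_walkOfSteps_iff s).mp hω⟩, ?_⟩, rfl⟩
    · rw [← stepVec_injective.ne_iff, ← walkOfSteps_one _ hn]
      exact hfirst hn
    · rw [← walkOfSteps_last, hlast]

lemma bvec_eq_restrictedNBWeight (k : Fin d → ℝ) (ι : Idx d) :
    bvec d n k ι = restrictedNBWeight negIdx (stepPhase k) n ι := by
  have hcount : bcRes d n ι = fun x =>
      #{s ∈ univ.filter (IsRestrictedNB negIdx ι) | ∑ t, stepVec (s t) = x} :=
    funext fun x => by rw [bcRes_eq_card, filter_filter]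
  rw [bvec, hcount, fhat_card_filter, restrictedNBWeight]
  exact sum_congr rfl fun s _ => exp_sum_mul_sum_stepVec k s

end Counting

lemma abs_Dhat_le_one {d : ℕ} (k : Fin d → ℝ) : |Dhat k| ≤ 1 := by
  have hsum : |∑ j, Real.cos (k j)| ≤ d :=
    calc |∑ j, Real.cos (k j)| ≤ ∑ j, |Real.cos (k j)| := Finset.abs_sum_le_sum_abs _ _
      _ ≤ ∑ _j : Fin d, 1 := Finset.sum_le_sum fun j _ => Real.abs_cos_le_one (k j)
      _ = d := by simp
  rw [Dhat, abs_mul, abs_of_nonneg (by positivity)]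
  rcases eq_or_ne d 0 with rfl | hd
  · simp
  · calc 1 / (d : ℝ) * |∑ j, Real.cos (k j)| ≤ 1 / d * d := by gcongr
      _ = 1 := one_div_mul_cancel (by exact_mod_cast hd)

lemma one_sub_mul_Dhat_add_mul_sq_pos {d : ℕ} (k : Fin d → ℝ) {z : ℝ} (hd : 1 ≤ d)
    (hz : |z| * (2 * d - 1) < 1) : 0 < 1 - 2 * d * Dhat k * z + (2 * d - 1) * z ^ 2 := by
  have hd' : (1 : ℝ) ≤ d := by exact_mod_cast hd
  have hzD : z * Dhat k ≤ |z| := by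
    calc z * Dhat k ≤ |z * Dhat k| := le_abs_self _
      _ ≤ |z| := by rw [abs_mul]; exact mul_le_of_le_one_right (abs_nonneg z) (abs_Dhat_le_one k)
  have hfactor : 0 < (1 - |z|) * (1 - (2 * d - 1) * |z|) := by
    apply mul_pos <;> nlinarith [abs_nonneg z]
  nlinarith [sq_abs z]

theorem nbw_restricted_green_function_general (d : ℕ) (ι : Idx d) (k : Fin d → ℝ) (z : ℝ)
    (hz : |z| < 1 / (2 * d - 1)) :
    HasSum (fun n : ℕ => bvec d n k ι * (z : ℂ) ^ n)
      ((1 - (z : ℂ) * Complex.exp (Complex.I * (kc k ι : ℂ))) /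
        (1 + (2 * (d : ℂ) - 1) * (z : ℂ) ^ 2 - 2 * d * (z : ℂ) * (Dhat k : ℂ))) := by
  have hd : (1 : ℝ) ≤ d := by exact_mod_cast (Idx.one_le ι)
  have hz' : |z| * (2 * d - 1) < 1 := (lt_div_iff₀ (by linarith)).mp (by simpa using hz)
  have hsum := summable_mul_pow_of_norm_le_pow
    (norm_restrictedNBWeight_stepPhase_le k · ι) (z := (z : ℂ)) (by simpa using hz')
  have hden : 1 - 2 * d * Dhat k * (z : ℂ) + (2 * d - 1) * (z : ℂ) ^ 2 ≠ 0 := by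
    exact_mod_cast (one_sub_mul_Dhat_add_mul_sq_pos k (Idx.one_le ι) hz').ne'
  simp_rw [bvec_eq_restrictedNBWeight]
  refine (congrArg (HasSum _) ?_).mpr <| hasSum_mul_pow_of_linear_recurrence
    (restrictedNBWeight_stepPhase_add_two k · ι) hsum hden
  rw [restrictedNBWeight_zero, restrictedNBWeight_one (stepPhase_mul_stepPhase_negIdx k),
    sum_stepPhase, stepPhase]
  ring

/-- for `ι ∈ I` and `|z| < 1/(2d−1)`,
`Σ_n b̂_n^ι(k) zⁿ = (1 − z·e^{ik_ι})/(1+(2d−1)z²−2dz·D̂(k))`. -/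
theorem nbw_restricted_green_function (d : ℕ) (hd : 2 ≤ d) (ι : Idx d) (k : Fin d → ℝ)
    (hk : ∀ j, k j ∈ Set.Icc (-Real.pi) Real.pi) (z : ℝ)
    (hz : |z| < 1 / (2 * d - 1)) :
    HasSum (fun n : ℕ => bvec d n k ι * (z : ℂ) ^ n)
      ((1 - (z : ℂ) * Complex.exp (Complex.I * (kc k ι : ℂ))) /
        (1 + (2 * (d : ℂ) - 1) * (z : ℂ) ^ 2 - 2 * d * (z : ℂ) * (Dhat k : ℂ))) :=
  nbw_restricted_green_function_general d ι k z hz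

end
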